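/- arXiv:1101.0075 — 3 statements merged into one kernel-verified Lean document; each statement's English description precedes it below -/
import Mathlib

section
/- If f : [a,b] × [c,d] → ℝ is convex on the coordinates (convex in each variable separately), then f((a+b)/2, (c+d)/2) ≤ (1/((b-a)(d-c)))·∫ₐᵇ∫_c^d f(x,y) dy dx ≤ [f(a,c) + f(b,c) + f(a,d) + f(b,d)]/4. -/
/-!
Integrating the convexity inequalities of `y ↦ f x y` in `y` shows that
`F x = ∫ y in c..d, f x y` is convex on `[a, b]`. The theorem is then the one-variable
Hermite–Hadamard inequality `g ((a + b) / 2) (b - a) ≤ ∫ g ≤ (g a + g b) / 2 (b - a)`,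
applied to `F` on `[a, b]` and to the slices `f ((a + b) / 2) ·`, `f a ·`, `f b ·` on `[c, d]`.
That inequality follows by integrating `2 g ((a + b) / 2) ≤ g x + g (a + b - x) ≤ g a + g b`.
-/

open MeasureTheory Set

section HermiteHadamard

variable {a b x : ℝ} {g : ℝ → ℝ}

theorem add_sub_mem_Icc (hx : x ∈ Icc a b) : a + b - x ∈ Icc a b :=
  ⟨by linarith [hx.2], by linarith [hx.1]⟩

theorem ConvexOn.two_mul_map_midpoint_le (hg : ConvexOn ℝ (Icc a b) g) (hx : x ∈ Icc a b) :
    2 * g ((a + b) / 2) ≤ g x + g (a + b - x) := by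
  have h := hg.2 hx (add_sub_mem_Icc hx) (by norm_num : (0 : ℝ) ≤ 1 / 2)
    (by norm_num : (0 : ℝ) ≤ 1 / 2) (by norm_num)
  have hmid : (1 / 2 : ℝ) • x + (1 / 2 : ℝ) • (a + b - x) = (a + b) / 2 := by
    simp only [smul_eq_mul]; ring
  rw [hmid, smul_eq_mul, smul_eq_mul] at h
  linarith

theorem ConvexOn.map_add_map_sub_le (hg : ConvexOn ℝ (Icc a b) g) (hx : x ∈ Icc a b) :
    g x + g (a + b - x) ≤ g a + g b := by
  have hab : a ≤ b := hx.1.trans hx.2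
  have ha : a ∈ Icc a b := left_mem_Icc.2 hab
  have hb : b ∈ Icc a b := right_mem_Icc.2 hab
  rw [← segment_eq_Icc hab] at hx
  obtain ⟨s, t, hs, ht, hst, rfl⟩ := hx
  have hrefl : a + b - (s • a + t • b) = t • a + s • b := by
    simp only [smul_eq_mul]; linear_combination (-(a + b)) * hst
  have h₁ := hg.2 ha hb hs ht hst
  have h₂ := hg.2 ha hb ht hs (by linarith)
  rw [hrefl]
  simp only [smul_eq_mul] at h₁ h₂
  linear_combination h₁ + h₂ + (g a + g b) * hst

-- A convex function on `[a, b]` is continuous on `(a, b)` and squeezed between two constants.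
theorem ConvexOn.integrableOn_Icc (hg : ConvexOn ℝ (Icc a b) g) : IntegrableOn g (Icc a b) := by
  rcases lt_or_ge b a with hba | hab
  · simp [Icc_eq_empty_of_lt hba]
  have hupper : ∀ x ∈ Icc a b, g x ≤ max (g a) (g b) := fun x hx =>
    hg.le_on_segment (left_mem_Icc.2 hab) (right_mem_Icc.2 hab) (by rwa [segment_eq_Icc hab])
  have hlower : ∀ x ∈ Icc a b, 2 * g ((a + b) / 2) - max (g a) (g b) ≤ g x := fun x hx => by
    linarith [hg.two_mul_map_midpoint_le hx, hupper _ (add_sub_mem_Icc hx)]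
  have hcont : ContinuousOn g (Ioo a b) := by simpa using hg.continuousOn_interior
  rw [integrableOn_Icc_iff_integrableOn_Ioo]
  exact integrable_of_le_of_le (hcont.aestronglyMeasurable measurableSet_Ioo)
    (ae_restrict_of_forall_mem measurableSet_Ioo fun x hx => hlower x (Ioo_subset_Icc_self hx))
    (ae_restrict_of_forall_mem measurableSet_Ioo fun x hx => hupper x (Ioo_subset_Icc_self hx))
    (integrable_const _) (integrable_const _)

theorem ConvexOn.intervalIntegrable (hg : ConvexOn ℝ (Icc a b) g) (hab : a ≤ b) :
    IntervalIntegrable g volume a b :=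
  (intervalIntegrable_iff_integrableOn_Icc_of_le hab).2 hg.integrableOn_Icc

theorem IntervalIntegrable.comp_add_sub (hg : IntervalIntegrable g volume a b) :
    IntervalIntegrable (fun x => g (a + b - x)) volume a b := by
  simpa using (hg.comp_sub_left (a + b)).symm

theorem IntervalIntegrable.add_comp_add_sub_div_two (hg : IntervalIntegrable g volume a b) :
    IntervalIntegrable (fun x => (g x + g (a + b - x)) / 2) volume a b :=
  (hg.add hg.comp_add_sub).div_const 2

theorem intervalIntegral.integral_add_comp_add_sub_div_two (hg : IntervalIntegrable g volume a b) :
    ∫ x in a..b, (g x + g (a + b - x)) / 2 = ∫ x in a..b, g x := by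
  rw [intervalIntegral.integral_div, intervalIntegral.integral_add hg hg.comp_add_sub,
    intervalIntegral.integral_comp_sub_left g (a + b)]
  simp

theorem ConvexOn.map_midpoint_mul_le_intervalIntegral (hg : ConvexOn ℝ (Icc a b) g)
    (hab : a ≤ b) : g ((a + b) / 2) * (b - a) ≤ ∫ x in a..b, g x := by
  have hi := hg.intervalIntegrable hab
  calc g ((a + b) / 2) * (b - a) = ∫ _ in a..b, g ((a + b) / 2) := by simp [mul_comm]
    _ ≤ ∫ x in a..b, (g x + g (a + b - x)) / 2 :=
        intervalIntegral.integral_mono_on hab intervalIntegrable_const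
          hi.add_comp_add_sub_div_two fun x hx => by linarith [hg.two_mul_map_midpoint_le hx]
    _ = ∫ x in a..b, g x := intervalIntegral.integral_add_comp_add_sub_div_two hi

theorem ConvexOn.intervalIntegral_le_average_endpoints_mul (hg : ConvexOn ℝ (Icc a b) g)
    (hab : a ≤ b) : ∫ x in a..b, g x ≤ (g a + g b) / 2 * (b - a) := by
  have hi := hg.intervalIntegrable hab
  calc ∫ x in a..b, g x = ∫ x in a..b, (g x + g (a + b - x)) / 2 :=
        (intervalIntegral.integral_add_comp_add_sub_div_two hi).symm
    _ ≤ ∫ _ in a..b, (g a + g b) / 2 :=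
        intervalIntegral.integral_mono_on hab
          hi.add_comp_add_sub_div_two intervalIntegrable_const
          fun x hx => by linarith [hg.map_add_map_sub_le hx]
    _ = (g a + g b) / 2 * (b - a) := by rw [intervalIntegral.integral_const, smul_eq_mul, mul_comm]

end HermiteHadamard

theorem convexOn_intervalIntegral {E : Type*} [AddCommMonoid E] [Module ℝ E] {s : Set E}
    {c d : ℝ} (hcd : c ≤ d) {f : E → ℝ → ℝ}
    (hconv : ∀ y ∈ Icc c d, ConvexOn ℝ s (f · y))
    (hint : ∀ x ∈ s, IntervalIntegrable (f x) volume c d) :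
    ConvexOn ℝ s fun x => ∫ y in c..d, f x y := by
  simp only [intervalIntegral.integral_of_le hcd]
  refine integral_convexOn_of_integrand_ae (hconv c (left_mem_Icc.2 hcd)).1
    (ae_restrict_of_forall_mem measurableSet_Ioc fun y hy => hconv y (Ioc_subset_Icc_self hy))
    fun x hx => (hint x hx).1

theorem coordinate_convex_hadamard_general (a b c d : ℝ) (hab : a < b) (hcd : c < d)
    (f : ℝ → ℝ → ℝ)
    (hconv₁ : ∀ y ∈ Set.Icc c d, ConvexOn ℝ (Set.Icc a b) (fun x => f x y))
    (hconv₂ : ∀ x ∈ Set.Icc a b, ConvexOn ℝ (Set.Icc c d) (fun y => f x y)) :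
    f ((a + b) / 2) ((c + d) / 2)
        ≤ (1 / ((b - a) * (d - c))) * ∫ x in a..b, ∫ y in c..d, f x y ∧
    (1 / ((b - a) * (d - c))) * (∫ x in a..b, ∫ y in c..d, f x y)
        ≤ (f a c + f b c + f a d + f b d) / 4 := by
  set F : ℝ → ℝ := fun x => ∫ y in c..d, f x y
  have hF : ConvexOn ℝ (Icc a b) F :=
    convexOn_intervalIntegral hcd.le hconv₁ fun x hx => (hconv₂ x hx).intervalIntegrable hcd.le
  have hmid : (a + b) / 2 ∈ Icc a b := ⟨by linarith, by linarith⟩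
  have hba : 0 < b - a := sub_pos.2 hab
  have hdc : 0 < d - c := sub_pos.2 hcd
  rw [one_div, inv_mul_eq_div, le_div_iff₀ (mul_pos hba hdc), div_le_iff₀ (mul_pos hba hdc)]
  constructor
  · have hinner := (hconv₂ _ hmid).map_midpoint_mul_le_intervalIntegral hcd.le
    calc f ((a + b) / 2) ((c + d) / 2) * ((b - a) * (d - c))
        = f ((a + b) / 2) ((c + d) / 2) * (d - c) * (b - a) := by ring
      _ ≤ F ((a + b) / 2) * (b - a) := by gcongr
      _ ≤ ∫ x in a..b, F x := hF.map_midpoint_mul_le_intervalIntegral hab.le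
  · have hinner_a :=
      (hconv₂ a (left_mem_Icc.2 hab.le)).intervalIntegral_le_average_endpoints_mul hcd.le
    have hinner_b :=
      (hconv₂ b (right_mem_Icc.2 hab.le)).intervalIntegral_le_average_endpoints_mul hcd.le
    calc ∫ x in a..b, F x ≤ (F a + F b) / 2 * (b - a) :=
          hF.intervalIntegral_le_average_endpoints_mul hab.le
      _ ≤ ((f a c + f a d) / 2 * (d - c) + (f b c + f b d) / 2 * (d - c)) / 2 * (b - a) := by
          gcongr
      _ = (f a c + f b c + f a d + f b d) / 4 * ((b - a) * (d - c)) := by ring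

theorem coordinate_convex_hadamard (a b c d : ℝ) (hab : a < b) (hcd : c < d)
    (f : ℝ → ℝ → ℝ)
    (hint : IntegrableOn (fun z : ℝ × ℝ => f z.1 z.2) (Set.Icc a b ×ˢ Set.Icc c d))
    (hconv₁ : ∀ y ∈ Set.Icc c d, ConvexOn ℝ (Set.Icc a b) (fun x => f x y))
    (hconv₂ : ∀ x ∈ Set.Icc a b, ConvexOn ℝ (Set.Icc c d) (fun y => f x y)) :
    f ((a + b) / 2) ((c + d) / 2)
        ≤ (1 / ((b - a) * (d - c))) * ∫ x in a..b, ∫ y in c..d, f x y ∧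
    (1 / ((b - a) * (d - c))) * (∫ x in a..b, ∫ y in c..d, f x y)
        ≤ (f a c + f b c + f a d + f b d) / 4 :=
  coordinate_convex_hadamard_general a b c d hab hcd f hconv₁ hconv₂
end

section
/- Let f : [a,b] → ℝ be four times continuously differentiable with ‖f⁗‖_∞ = sup_{x∈[a,b]} |f⁗(x)| < ∞. Then |(1/3)·[(f(a)+f(b))/2 + 2f((a+b)/2)] − (1/(b-a))∫ₐᵇ f(x) dx| ≤ (1/2880)·‖f⁗‖_∞·(b-a)⁴. -/
/-!
Put `c = (a + b) / 2`, `h = (b - a) / 2` and fold `f` about `c` into `g t = f (c + t) + f (c - t)`,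
so that `∫ x in a..b, f x = ∫ t in 0..h, g t`. The Simpson error
`E t = t / 3 * (g t + 2 * g 0) - ∫ s in 0..t, g s` satisfies `E 0 = E' 0 = E'' 0 = 0` and
`E''' t = t / 3 * g''' t`, where `g''' t = f''' (c + t) - f''' (c - t)` is at most `2 M t` in size.
Integrating the bound `|E'''| ≤ 2 M t² / 3` three times gives `|E h| ≤ M h⁵ / 90`.
-/

open MeasureTheory Set

lemma abs_le_of_abs_hasDerivWithinAt_le_pow {u u' : ℝ → ℝ} {h C : ℝ} (k : ℕ) (hu₀ : u 0 = 0)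
    (hu : ∀ t ∈ Icc 0 h, HasDerivWithinAt u (u' t) (Icc 0 h) t)
    (hu' : ∀ t ∈ Icc 0 h, |u' t| ≤ C * t ^ k) :
    ∀ t ∈ Icc 0 h, |u t| ≤ C / (k + 1) * t ^ (k + 1) := by
  have hB : ∀ x, HasDerivAt (fun s : ℝ => C / (k + 1) * s ^ (k + 1)) (C * x ^ k) x := fun x =>
    ((hasDerivAt_pow (k + 1) x).const_mul (C / (k + 1))).congr_deriv (by push_cast; field_simp)
  intro t ht
  simpa only [Real.norm_eq_abs] using image_norm_le_of_norm_deriv_right_le_deriv_boundary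
    (fun x hx => (hu x hx).continuousWithinAt)
    (fun x hx => (hu x (Ico_subset_Icc_self hx)).mono_of_mem_nhdsWithin
      (Icc_mem_nhdsGE_of_mem ⟨hx.1, hx.2⟩))
    (by simp [hu₀]) hB (fun x hx => hu' x (Ico_subset_Icc_self hx)) ht

lemma hasDerivWithinAt_integral_of_continuousOn {f : ℝ → ℝ} {a b : ℝ}
    (hf : ContinuousOn f (Icc a b)) :
    ∀ y ∈ Icc a b, HasDerivWithinAt (fun u => ∫ x in a..u, f x) (f y) (Icc a b) y := by
  intro y hy
  have : Fact (y ∈ Icc a b) := ⟨hy⟩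
  exact intervalIntegral.integral_hasDerivWithinAt_right
    (hf.mono (by rw [uIcc_of_le hy.1]; exact Icc_subset_Icc_right hy.2)).intervalIntegrable
    ⟨Icc a b, self_mem_nhdsWithin, hf.aestronglyMeasurable measurableSet_Icc⟩ (hf y hy)

lemma ContDiffOn.hasDerivWithinAt_iteratedDerivWithin {𝕜 F : Type*} [NontriviallyNormedField 𝕜]
    [NormedAddCommGroup F] [NormedSpace 𝕜 F] {f : 𝕜 → F} {s : Set 𝕜} {n k : ℕ}
    (hf : ContDiffOn 𝕜 n f s) (hs : UniqueDiffOn 𝕜 s) (hk : k < n) :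
    ∀ x ∈ s, HasDerivWithinAt (iteratedDerivWithin k f s) (iteratedDerivWithin (k + 1) f s x) s x :=
  fun x hx => by
    rw [iteratedDerivWithin_succ]
    exact (hf.differentiableOn_iteratedDerivWithin (by exact_mod_cast hk) hs x hx).hasDerivWithinAt

/-- `g` stands for `t ↦ f (c + t) + f (c - t)`, whose derivative vanishes at `0`. -/
theorem abs_simpson_sub_integral_le_of_deriv_zero {g g₁ g₂ g₃ : ℝ → ℝ} {h K : ℝ} (hh : 0 ≤ h)
    (hg : ∀ t ∈ Icc 0 h, HasDerivWithinAt g (g₁ t) (Icc 0 h) t)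
    (hg₁ : ∀ t ∈ Icc 0 h, HasDerivWithinAt g₁ (g₂ t) (Icc 0 h) t)
    (hg₂ : ∀ t ∈ Icc 0 h, HasDerivWithinAt g₂ (g₃ t) (Icc 0 h) t)
    (hg₁_zero : g₁ 0 = 0) (hg₃ : ∀ t ∈ Icc 0 h, |g₃ t| ≤ K * t) :
    |h / 3 * (g h + 2 * g 0) - ∫ t in 0..h, g t| ≤ K / 180 * h ^ 5 := by
  have hid : ∀ t, HasDerivWithinAt (fun s : ℝ => s / 3) (1 / 3) (Icc 0 h) t := fun t =>
    (hasDerivWithinAt_id t _).div_const 3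
  have hG := hasDerivWithinAt_integral_of_continuousOn
    (fun t ht => (hg t ht).continuousWithinAt)
  have hE₀ : ∀ t ∈ Icc 0 h, HasDerivWithinAt
      (fun t => t / 3 * (g t + 2 * g 0) - ∫ s in 0..t, g s)
      (t / 3 * g₁ t - 2 / 3 * g t + 2 / 3 * g 0) (Icc 0 h) t := fun t ht =>
    (((hid t).mul ((hg t ht).add_const _)).sub (hG t ht)).congr_deriv (by ring)
  have hE₁ : ∀ t ∈ Icc 0 h, HasDerivWithinAt (fun t => t / 3 * g₁ t - 2 / 3 * g t + 2 / 3 * g 0)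
      (t / 3 * g₂ t - 1 / 3 * g₁ t) (Icc 0 h) t := fun t ht =>
    ((((hid t).mul (hg₁ t ht)).sub ((hg t ht).const_mul _)).add_const _).congr_deriv (by ring)
  have hE₂ : ∀ t ∈ Icc 0 h, HasDerivWithinAt (fun t => t / 3 * g₂ t - 1 / 3 * g₁ t)
      (t / 3 * g₃ t) (Icc 0 h) t := fun t ht =>
    (((hid t).mul (hg₂ t ht)).sub ((hg₁ t ht).const_mul _)).congr_deriv (by ring)
  have hb₃ : ∀ t ∈ Icc 0 h, |t / 3 * g₃ t| ≤ K / 3 * t ^ 2 := fun t ht => by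
    rw [abs_mul, abs_of_nonneg (by linarith [ht.1] : 0 ≤ t / 3)]
    nlinarith [hg₃ t ht, ht.1]
  have hb₂ : ∀ t ∈ Icc 0 h, |t / 3 * g₂ t - 1 / 3 * g₁ t| ≤ K / 9 * t ^ 3 := fun t ht =>
    (abs_le_of_abs_hasDerivWithinAt_le_pow 2 (by simp [hg₁_zero]) hE₂ hb₃ t ht).trans_eq
      (by push_cast; ring)
  have hb₁ : ∀ t ∈ Icc 0 h, |t / 3 * g₁ t - 2 / 3 * g t + 2 / 3 * g 0| ≤ K / 36 * t ^ 4 :=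
    fun t ht => (abs_le_of_abs_hasDerivWithinAt_le_pow 3 (by simp) hE₁ hb₂ t ht).trans_eq
      (by push_cast; ring)
  exact (abs_le_of_abs_hasDerivWithinAt_le_pow 4 (by simp) hE₀ hb₁ h ⟨hh, le_rfl⟩).trans_eq
    (by push_cast; ring)

def foldAt (φ : ℝ → ℝ) (c σ t : ℝ) : ℝ := φ (c + t) + σ * φ (c - t)

lemma hasDerivWithinAt_foldAt {φ φ' : ℝ → ℝ} {s : Set ℝ} {c h σ : ℝ}
    (hs_add : MapsTo (c + ·) (Icc 0 h) s) (hs_sub : MapsTo (c - ·) (Icc 0 h) s)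
    (hφ : ∀ x ∈ s, HasDerivWithinAt φ (φ' x) s x) :
    ∀ t ∈ Icc 0 h, HasDerivWithinAt (foldAt φ c σ) (foldAt φ' c (-σ) t) (Icc 0 h) t := by
  intro t ht
  have h_add := (hφ _ (hs_add ht)).comp t ((hasDerivWithinAt_id t _).const_add c) hs_add
  have h_sub := (hφ _ (hs_sub ht)).comp t ((hasDerivWithinAt_id t _).const_sub c) hs_sub
  exact (h_add.add (h_sub.const_mul σ)).congr_deriv (by simp [foldAt])

lemma integral_foldAt_one {f : ℝ → ℝ} {c h : ℝ} (hh : 0 ≤ h)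
    (hf : IntervalIntegrable f volume (c - h) (c + h)) :
    ∫ t in 0..h, foldAt f c 1 t = ∫ x in (c - h)..(c + h), f x := by
  have hsub : uIcc 0 h ⊆ uIcc (-h) h := uIcc_subset_uIcc (by simp [hh]) (by simp)
  have h_add : IntervalIntegrable (fun t => f (c + t)) volume 0 h :=
    (hf.comp_add_left c).mono_set (by simpa using hsub)
  have h_sub : IntervalIntegrable (fun t => f (c - t)) volume 0 h :=
    (hf.comp_sub_left c).mono_set (by simpa [uIcc_comm] using hsub)
  have hc : c ∈ uIcc (c - h) (c + h) := mem_uIcc_of_le (by linarith) (by linarith)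
  simp only [foldAt, one_mul]
  rw [intervalIntegral.integral_add h_add h_sub, intervalIntegral.integral_comp_add_left,
    intervalIntegral.integral_comp_sub_left, add_comm]
  simp only [add_zero, sub_zero]
  exact intervalIntegral.integral_add_adjacent_intervals
    (hf.mono_set (uIcc_subset_uIcc left_mem_uIcc hc))
    (hf.mono_set (uIcc_subset_uIcc hc right_mem_uIcc))

theorem abs_simpson_sub_integral_le_of_lipschitzOn_third_deriv {f f₁ f₂ f₃ : ℝ → ℝ} {a b M : ℝ}
    (hab : a ≤ b)
    (hf : ∀ x ∈ Icc a b, HasDerivWithinAt f (f₁ x) (Icc a b) x)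
    (hf₁ : ∀ x ∈ Icc a b, HasDerivWithinAt f₁ (f₂ x) (Icc a b) x)
    (hf₂ : ∀ x ∈ Icc a b, HasDerivWithinAt f₂ (f₃ x) (Icc a b) x)
    (hf₃ : ∀ x ∈ Icc a b, ∀ y ∈ Icc a b, |f₃ y - f₃ x| ≤ M * |y - x|) :
    |(b - a) / 6 * (f a + 4 * f ((a + b) / 2) + f b) - ∫ x in a..b, f x|
      ≤ M / 2880 * (b - a) ^ 5 := by
  obtain ⟨c, h, rfl, rfl⟩ : ∃ c h, a = c - h ∧ b = c + h :=
    ⟨(a + b) / 2, (b - a) / 2, by ring, by ring⟩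
  have hh : 0 ≤ h := by linarith
  have hs_add : MapsTo (c + ·) (Icc 0 h) (Icc (c - h) (c + h)) := fun t ht =>
    ⟨by linarith [ht.1], by linarith [ht.2]⟩
  have hs_sub : MapsTo (c - ·) (Icc 0 h) (Icc (c - h) (c + h)) := fun t ht =>
    ⟨by linarith [ht.2], by linarith [ht.1]⟩
  have hfold₃ : ∀ t ∈ Icc 0 h, |foldAt f₃ c (-(-(-1))) t| ≤ 2 * M * t := fun t ht =>
    calc |foldAt f₃ c (-(-(-1))) t| = |f₃ (c + t) - f₃ (c - t)| := by simp [foldAt, sub_eq_add_neg]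
      _ ≤ M * |c + t - (c - t)| := hf₃ _ (hs_sub ht) _ (hs_add ht)
      _ = 2 * M * t := by
        rw [show c + t - (c - t) = 2 * t by ring, abs_of_nonneg (by linarith [ht.1])]; ring
  have hcont : ContinuousOn f (uIcc (c - h) (c + h)) := by
    rw [uIcc_of_le hab]; exact fun x hx => (hf x hx).continuousWithinAt
  have key := abs_simpson_sub_integral_le_of_deriv_zero hh
    (hasDerivWithinAt_foldAt (σ := 1) hs_add hs_sub hf)
    (hasDerivWithinAt_foldAt hs_add hs_sub hf₁) (hasDerivWithinAt_foldAt hs_add hs_sub hf₂)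
    (by simp [foldAt]) hfold₃
  rw [integral_foldAt_one hh hcont.intervalIntegrable] at key
  calc _ = |h / 3 * (foldAt f c 1 h + 2 * foldAt f c 1 0) - ∫ x in (c - h)..(c + h), f x| := by
        rw [show (c - h + (c + h)) / 2 = c by ring]
        congr 2
        simp only [foldAt, add_zero, sub_zero]
        ring
    _ ≤ 2 * M / 180 * h ^ 5 := key
    _ = M / 2880 * (c + h - (c - h)) ^ 5 := by ring

theorem simpson_inequality_classical (a b M : ℝ) (hab : a < b) (f : ℝ → ℝ)
    (hf : ContDiffOn ℝ 4 f (Set.Icc a b))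
    (hM : ∀ x ∈ Set.Icc a b, |iteratedDerivWithin 4 f (Set.Icc a b) x| ≤ M) :
    |(1/3) * ((f a + f b) / 2 + 2 * f ((a + b) / 2))
        - (1 / (b - a)) * ∫ x in a..b, f x|
      ≤ (1/2880) * M * (b - a) ^ 4 := by
  have hD (k : ℕ) (hk : k < 4) :=
    hf.hasDerivWithinAt_iteratedDerivWithin (uniqueDiffOn_Icc hab) (k := k) hk
  have hLip : ∀ x ∈ Icc a b, ∀ y ∈ Icc a b, |iteratedDerivWithin 3 f (Icc a b) y
      - iteratedDerivWithin 3 f (Icc a b) x| ≤ M * |y - x| := fun x hx y hy => by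
    simpa only [Real.norm_eq_abs] using (convex_Icc a b).norm_image_sub_le_of_norm_hasDerivWithin_le
      (hD 3 (by norm_num)) hM hx hy
  have key := abs_simpson_sub_integral_le_of_lipschitzOn_third_deriv hab.le
    (by simpa only [iteratedDerivWithin_zero] using hD 0 (by norm_num))
    (hD 1 (by norm_num)) (hD 2 (by norm_num)) hLip
  have hba : 0 < b - a := sub_pos.mpr hab
  rw [show (1/3) * ((f a + f b) / 2 + 2 * f ((a + b) / 2)) - (1 / (b - a)) * ∫ x in a..b, f x
      = ((b - a) / 6 * (f a + 4 * f ((a + b) / 2) + f b) - ∫ x in a..b, f x) / (b - a) by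
    field_simp; ring, abs_div, abs_of_pos hba, div_le_iff₀ hba]
  exact key.trans_eq (by ring)
end

section
/- Let k be the Simpson kernel on [0,1] (k(t) = t - 1/6 on [0,1/2], k(t) = t - 5/6 on (1/2,1]) and let φ : [0,1] → ℝ be convex and nonnegative. Then ∫₀¹ |k(t)|·φ(t) dt ≤ (5/72)·(φ(0) + φ(1)). -/
open MeasureTheory intervalIntegral Set

lemma quad_int (c0 c1 c2 a b : ℝ) :
    ∫ t in a..b, (c0 + c1*t + c2*t^2) =
      (c0*b + c1*b^2/2 + c2*b^3/3) - (c0*a + c1*a^2/2 + c2*a^3/3) := by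
  have h : ∀ x ∈ Set.uIcc a b,
      HasDerivAt (fun x : ℝ => c0*x + c1*x^2/2 + c2*x^3/3) (c0 + c1*x + c2*x^2) x := by
    intro x _
    have h1 : HasDerivAt (fun x : ℝ => c0*x + c1*x^2/2 + c2*x^3/3)
        (c0*1 + c1*((2:ℕ)*x^1)/2 + c2*((3:ℕ)*x^2)/3) x :=
      (((hasDerivAt_id x).const_mul c0).add
        (((hasDerivAt_pow 2 x).const_mul c1).div_const 2)).add
        (((hasDerivAt_pow 3 x).const_mul c2).div_const 3)
    convert h1 using 1
    push_cast; ring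
  rw [intervalIntegral.integral_eq_sub_of_hasDerivAt h
    (Continuous.intervalIntegrable (by continuity) a b)]

theorem simpson_kernel_abs_convex_bound (φ : ℝ → ℝ)
    (hφ : ConvexOn ℝ (Set.Icc (0:ℝ) 1) φ)
    (hφ0 : ∀ t ∈ Set.Icc (0:ℝ) 1, 0 ≤ φ t) :
    (∫ t in (0:ℝ)..1, |if t ≤ 1/2 then t - 1/6 else t - 5/6| * φ t)
      ≤ 5/72 * (φ 0 + φ 1) := by
  set A := φ 0 with hA
  set B := φ 1 with hB
  set k : ℝ → ℝ := fun t => |if t ≤ 1/2 then t - 1/6 else t - 5/6| with hk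
  set h : ℝ → ℝ := fun t => k t * ((1-t)*A + t*B) with hh
  have hA0 : 0 ≤ A := hφ0 0 (by norm_num)
  have hB0 : 0 ≤ B := hφ0 1 (by norm_num)
  have hkmeas : Measurable k := by
    apply Measurable.abs
    exact Measurable.ite (measurableSet_le measurable_id measurable_const)
      (measurable_id.sub measurable_const) (measurable_id.sub measurable_const)
  have hknonneg : ∀ t, 0 ≤ k t := fun t => abs_nonneg _
  have hkle : ∀ t ∈ Set.Icc (0:ℝ) 1, k t ≤ 1 := by
    intro t ht
    simp only [hk]
    split <;> rw [abs_le] <;> constructor <;> nlinarith [ht.1, ht.2]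
  -- pointwise bound by convexity
  have hpt : ∀ t ∈ Set.Icc (0:ℝ) 1, k t * φ t ≤ h t := by
    intro t ht
    have hconv := hφ.2 (Set.left_mem_Icc.mpr zero_le_one) (Set.right_mem_Icc.mpr zero_le_one)
      (by linarith [ht.2] : (0:ℝ) ≤ 1 - t) ht.1 (by ring)
    simp only [smul_eq_mul, mul_zero, mul_one, zero_add] at hconv
    exact mul_le_mul_of_nonneg_left (by simpa using hconv) (hknonneg t)
  have hbound : ∀ t ∈ Set.Icc (0:ℝ) 1, h t ≤ A + B := by
    intro t ht
    have h1 : (1-t)*A + t*B ≤ A + B := by nlinarith [ht.1, ht.2]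
    have h2 : 0 ≤ (1-t)*A + t*B := by nlinarith [ht.1, ht.2]
    calc h t ≤ 1 * ((1-t)*A + t*B) := mul_le_mul_of_nonneg_right (hkle t ht) h2
    _ ≤ A + B := by linarith
  -- integrability of h
  have hhm : Measurable h := hkmeas.mul (by fun_prop)
  have hhint : IntervalIntegrable h volume 0 1 := by
    rw [intervalIntegrable_iff_integrableOn_Ioc_of_le zero_le_one]
    apply Integrable.mono' (integrable_const (A + B)) hhm.aestronglyMeasurable.restrict
    filter_upwards [ae_restrict_mem measurableSet_Ioc] with t ht
    have ht' : t ∈ Set.Icc (0:ℝ) 1 := Set.Ioc_subset_Icc_self ht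
    rw [Real.norm_eq_abs, abs_of_nonneg (mul_nonneg (hknonneg t) (by nlinarith [ht'.1, ht'.2]))]
    exact hbound t ht'
  -- integrability of g
  have hφcont : ContinuousOn φ (Set.Ioo (0:ℝ) 1) := by
    have := (hφ.subset Set.Ioo_subset_Icc_self (convex_Ioo 0 1)).continuousOn isOpen_Ioo
    exact this
  have hgm : AEStronglyMeasurable (fun t => k t * φ t) (volume.restrict (Set.Ioc (0:ℝ) 1)) := by
    have h1 : AEStronglyMeasurable φ (volume.restrict (Set.Ioo (0:ℝ) 1)) :=
      hφcont.aestronglyMeasurable measurableSet_Ioo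
    have h2 : AEStronglyMeasurable φ (volume.restrict (Set.Ioc (0:ℝ) 1)) := by
      rwa [Measure.restrict_congr_set Ioo_ae_eq_Ioc] at h1
    exact (hkmeas.aestronglyMeasurable.restrict).mul h2
  have hgint : IntervalIntegrable (fun t => k t * φ t) volume 0 1 := by
    rw [intervalIntegrable_iff_integrableOn_Ioc_of_le zero_le_one]
    apply Integrable.mono' (integrable_const (A + B)) hgm
    filter_upwards [ae_restrict_mem measurableSet_Ioc] with t ht
    have ht' : t ∈ Set.Icc (0:ℝ) 1 := Set.Ioc_subset_Icc_self ht
    rw [Real.norm_eq_abs, abs_of_nonneg (mul_nonneg (hknonneg t) (hφ0 t ht'))]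
    exact le_trans (hpt t ht') (hbound t ht')
  -- comparison
  have hmono : (∫ t in (0:ℝ)..1, k t * φ t) ≤ ∫ t in (0:ℝ)..1, h t :=
    intervalIntegral.integral_mono_on zero_le_one hgint hhint hpt
  -- compute ∫ h
  have hsplit : (∫ t in (0:ℝ)..1, h t) = 5/72 * (A + B) := by
    have i1 : (∫ t in (0:ℝ)..(1/6:ℝ), h t)
        = ∫ t in (0:ℝ)..(1/6:ℝ), (A/6 + ((B-A)/6 - A)*t + (A-B)*t^2) := by
      apply intervalIntegral.integral_congr
      intro t ht
      rw [Set.uIcc_of_le (by norm_num)] at ht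
      simp only [hh, hk]
      rw [if_pos (by linarith [ht.2]), abs_of_nonpos (by linarith [ht.2])]
      ring
    have i2 : (∫ t in (1/6:ℝ)..(1/2:ℝ), h t)
        = ∫ t in (1/6:ℝ)..(1/2:ℝ), (-(A/6) + (A - (B-A)/6)*t + (B-A)*t^2) := by
      apply intervalIntegral.integral_congr
      intro t ht
      rw [Set.uIcc_of_le (by norm_num)] at ht
      simp only [hh, hk]
      rw [if_pos ht.2, abs_of_nonneg (by linarith [ht.1])]
      ring
    have i3 : (∫ t in (1/2:ℝ)..(5/6:ℝ), h t)
        = ∫ t in (1/2:ℝ)..(5/6:ℝ), (5*A/6 + (5*(B-A)/6 - A)*t + (A-B)*t^2) := by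
      apply intervalIntegral.integral_congr
      intro t ht
      rw [Set.uIcc_of_le (by norm_num)] at ht
      simp only [hh, hk]
      by_cases h2 : t ≤ 1/2
      · have : t = 1/2 := le_antisymm h2 ht.1
        subst this
        rw [if_pos le_rfl, show (1/2:ℝ) - 1/6 = 1/3 by norm_num,
          abs_of_nonneg (by norm_num : (0:ℝ) ≤ (1/3:ℝ))]
        ring
      · rw [if_neg h2, abs_of_nonpos (by linarith [ht.2])]
        ring
    have i4 : (∫ t in (5/6:ℝ)..(1:ℝ), h t)
        = ∫ t in (5/6:ℝ)..(1:ℝ), (-(5*A/6) + (A - 5*(B-A)/6)*t + (B-A)*t^2) := by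
      apply intervalIntegral.integral_congr
      intro t ht
      rw [Set.uIcc_of_le (by norm_num)] at ht
      simp only [hh, hk]
      rw [if_neg (by push_neg; linarith [ht.1]), abs_of_nonneg (by linarith [ht.1])]
      ring
    have m1 : IntervalIntegrable h volume 0 (1/6) :=
      hhint.mono_set (by rw [Set.uIcc_of_le (by norm_num : (0:ℝ) ≤ 1/6),
        Set.uIcc_of_le zero_le_one]; exact Set.Icc_subset_Icc le_rfl (by norm_num))
    have m2 : IntervalIntegrable h volume (1/6) (1/2) :=
      hhint.mono_set (by rw [Set.uIcc_of_le (by norm_num : (1/6:ℝ) ≤ 1/2),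
        Set.uIcc_of_le zero_le_one]; exact Set.Icc_subset_Icc (by norm_num) (by norm_num))
    have m3 : IntervalIntegrable h volume (1/2) (5/6) :=
      hhint.mono_set (by rw [Set.uIcc_of_le (by norm_num : (1/2:ℝ) ≤ 5/6),
        Set.uIcc_of_le zero_le_one]; exact Set.Icc_subset_Icc (by norm_num) (by norm_num))
    have m4 : IntervalIntegrable h volume (5/6) 1 :=
      hhint.mono_set (by rw [Set.uIcc_of_le (by norm_num : (5/6:ℝ) ≤ 1),
        Set.uIcc_of_le zero_le_one]; exact Set.Icc_subset_Icc (by norm_num) le_rfl)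
    rw [← intervalIntegral.integral_add_adjacent_intervals (m1.trans m2) (m3.trans m4),
        ← intervalIntegral.integral_add_adjacent_intervals m1 m2,
        ← intervalIntegral.integral_add_adjacent_intervals m3 m4,
        i1, i2, i3, i4, quad_int, quad_int, quad_int, quad_int]
    ring
  calc (∫ t in (0:ℝ)..1, |if t ≤ 1/2 then t - 1/6 else t - 5/6| * φ t)
      = ∫ t in (0:ℝ)..1, k t * φ t := rfl
    _ ≤ ∫ t in (0:ℝ)..1, h t := hmono
    _ = 5/72 * (A + B) := hsplit
end
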